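/- arXiv:1104.3003 — 5 statements merged into one kernel-verified Lean document; each statement's English description precedes it below -/
import Mathlib

section
/- For every integer m ≥ 1 and every labelled combinatorial map (σ, α) with m edges, the Euler characteristic χ(σ, α) = c(σ) − c(α) + c(σ∘α) is an even integer and satisfies χ(σ, α) ≤ 2. -/
/-- Number of cycles of a permutation of `Fin n`, counting fixed points
as cycles of length 1. -/
def cycleCount {n : ℕ} (π : Equiv.Perm (Fin n)) : ℕ :=
  Multiset.card π.cycleType + (Finset.univ.filter fun x => π x = x).card

/-- A labelled combinatorial map: `α` is a fixed-point-free involution and the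
subgroup generated by `σ` and `α` acts transitively. -/
def IsCombMap {n : ℕ} (σ α : Equiv.Perm (Fin n)) : Prop :=
  α * α = 1 ∧ (∀ x, α x ≠ x) ∧
  ∀ x y : Fin n, ∃ g ∈ Subgroup.closure ({σ, α} : Set (Equiv.Perm (Fin n))), g x = y

/-- Euler characteristic of a labelled combinatorial map. -/
def eulerChar {n : ℕ} (σ α : Equiv.Perm (Fin n)) : ℤ :=
  (cycleCount σ : ℤ) - (cycleCount α : ℤ) + (cycleCount (σ * α) : ℤ)

/-!
Write `α` as the product `τ₁ ⋯ τₘ` of its `m` disjoint transpositions and add them to `σ` one at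
a time. For a transposition `τ = swap a b` and a group `H ∋ ρ`, cycle counts `c` and orbit counts
`t` move together: if `a` and `b` lie in one `H`-orbit, then `t ⟨H, τ⟩ = t H` and
`c (ρ * τ) ≤ c ρ + 1`; otherwise `t` drops by one, `a` and `b` lie in different cycles of `ρ`, and
`c (ρ * τ) = c ρ - 1`. So `c (σ τ₁ ⋯ τₖ) + c σ - k - 2 t ⟨σ, τ₁, …, τₖ⟩` never increases from its
value `0` at `k = 0`, and transitivity (`t = 1`) gives `c (σ * α) + c σ ≤ m + 2`.
Evenness comes from `sign π = (-1) ^ (n + c π)` and the multiplicativity of `sign`.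
-/

open Equiv MulAction Subgroup Finset
open scoped Pointwise

theorem Subgroup.zpowers_mul_sup_zpowers {G : Type*} [Group G] (g h : G) :
    zpowers (g * h) ⊔ zpowers h = zpowers g ⊔ zpowers h := by
  refine le_antisymm (sup_le ?_ le_sup_right) (sup_le ?_ le_sup_right) <;> rw [zpowers_le]
  · exact mul_mem (mem_sup_left (mem_zpowers g)) (mem_sup_right (mem_zpowers h))
  · simpa using
      mul_mem (mem_sup_left (mem_zpowers (g * h))) (inv_mem (mem_sup_right (mem_zpowers h)))

namespace Equiv.Perm

variable {α : Type*}

noncomputable def numOrbits (H : Subgroup (Perm α)) : ℕ :=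
  Nat.card (orbitRel.Quotient H α)

section Orbits

variable {H K : Subgroup (Perm α)} {a b x y : α}

lemma mem_orbit_subgroup_iff : y ∈ orbit H x ↔ ∃ g ∈ H, g x = y := by
  simp [mem_orbit_iff, Subgroup.smul_def, Perm.smul_def]

lemma mem_orbit_zpowers_iff {π : Perm α} : y ∈ orbit (zpowers π) x ↔ π.SameCycle x y := by
  simp [mem_orbit_subgroup_iff, mem_zpowers_iff, SameCycle]

lemma orbit_mono (h : H ≤ K) (x : α) : orbit H x ⊆ orbit K x := fun _ hy =>
  let ⟨g, hg, hgx⟩ := mem_orbit_subgroup_iff.1 hy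
  mem_orbit_subgroup_iff.2 ⟨g, h hg, hgx⟩

lemma orbit_subset_of_le_stabilizer {A : Set α} (hH : H ≤ stabilizer (Perm α) A) (hx : x ∈ A) :
    orbit H x ⊆ A := by
  rintro _ ⟨g, rfl⟩
  rw [← mem_stabilizer_iff.1 (hH g.2)]
  exact Set.smul_mem_smul_set hx

lemma le_stabilizer_orbit (H : Subgroup (Perm α)) (x : α) :
    H ≤ stabilizer (Perm α) (orbit H x) :=
  fun g hg => smul_orbit (⟨g, hg⟩ : H) x

-- Both `orbit H a ∪ orbit H b` and every `H`-orbit missing `a` and `b` are invariant under `H`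
-- and under `swap a b`.
lemma mem_orbit_sup_swap [DecidableEq α] (hy : y ∈ orbit ↥(H ⊔ zpowers (swap a b)) x) :
    y ∈ orbit H x ∨ (x ∈ orbit H a ∪ orbit H b ∧ y ∈ orbit H a ∪ orbit H b) := by
  by_cases hx : x ∈ orbit H a ∪ orbit H b
  · refine .inr ⟨hx, orbit_subset_of_le_stabilizer (sup_le (fun g hg => ?_) ?_) hx hy⟩
    · rw [mem_stabilizer_iff, Set.smul_set_union, le_stabilizer_orbit H a hg,
        le_stabilizer_orbit H b hg]
    · rw [zpowers_le, Equiv.swap_mem_stabilizer]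
      exact iff_of_true (.inl (mem_orbit_self a)) (.inr (mem_orbit_self b))
  · refine .inl (orbit_subset_of_le_stabilizer (sup_le (le_stabilizer_orbit H x) ?_)
      (mem_orbit_self x) hy)
    simp only [Set.mem_union, not_or] at hx
    rw [zpowers_le, Equiv.swap_mem_stabilizer, mem_orbit_symm, mem_orbit_symm (a₁ := b)]
    exact iff_of_false hx.1 hx.2

end Orbits

section Counting

variable [Finite α] {H K : Subgroup (Perm α)} {a b : α}

def orbitQuotientOfLE (h : H ≤ K) : orbitRel.Quotient H α → orbitRel.Quotient K α :=
  Quotient.map id fun _ _ hxy => orbit_mono h _ hxy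

lemma numOrbits_antitone : Antitone (numOrbits (α := α)) := fun _ _ h =>
  Nat.card_le_card_of_surjective (orbitQuotientOfLE h)
    (Quotient.map_surjective _ Function.surjective_id)

lemma numOrbits_le_one (h : ∀ x y : α, ∃ g ∈ H, g x = y) : numOrbits H ≤ 1 :=
  Finite.card_le_one_iff_subsingleton.2
    ⟨by rintro ⟨x⟩ ⟨y⟩; exact Quotient.sound (mem_orbit_subgroup_iff.2 (h y x))⟩

variable [DecidableEq α]

lemma numOrbits_sup_swap_of_mem_orbit (h : b ∈ orbit H a) :
    numOrbits (H ⊔ zpowers (swap a b)) = numOrbits H := by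
  refine (numOrbits_antitone le_sup_left).antisymm
    (Nat.card_le_card_of_injective (orbitQuotientOfLE le_sup_left) ?_)
  rintro ⟨x⟩ ⟨y⟩ hxy
  refine Quotient.sound ?_
  rcases mem_orbit_sup_swap (Quotient.exact hxy) with hxy | ⟨hy, hx⟩
  · exact hxy
  · rw [orbit_eq_iff.2 h, Set.union_self] at hx hy
    exact orbit_eq_iff.1 ((orbit_eq_iff.2 hx).trans (orbit_eq_iff.2 hy).symm)

-- Away from the orbit of `b`, the orbits of `H` map bijectively onto those of `H ⊔ ⟨swap a b⟩`.
lemma numOrbits_sup_swap_add_one (h : b ∉ orbit H a) :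
    numOrbits (H ⊔ zpowers (swap a b)) + 1 = numOrbits H := by
  classical
  let f : {q : orbitRel.Quotient H α // q ≠ ⟦b⟧} →
      orbitRel.Quotient ↥(H ⊔ zpowers (swap a b)) α :=
    fun q => orbitQuotientOfLE le_sup_left q
  have hf : f.Bijective := by
    constructor
    · rintro ⟨⟨x⟩, hx⟩ ⟨⟨y⟩, hy⟩ hxy
      have hxb : x ∉ orbit H b := fun hxb => hx (Quotient.sound hxb)
      have hyb : y ∉ orbit H b := fun hyb => hy (Quotient.sound hyb)
      refine Subtype.ext (Quotient.sound ?_)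
      rcases mem_orbit_sup_swap (Quotient.exact hxy) with hxy | ⟨hy, hx⟩
      · exact hxy
      · exact orbit_eq_iff.1 ((orbit_eq_iff.2 (hx.resolve_right hxb)).trans
          (orbit_eq_iff.2 (hy.resolve_right hyb)).symm)
    · rintro ⟨x⟩
      by_cases hx : x ∈ orbit H b
      · refine ⟨⟨⟦a⟧, fun e => h (mem_orbit_symm.1 (Quotient.exact e))⟩, Quotient.sound ?_⟩
        have hab : a ∈ orbit ↥(H ⊔ zpowers (swap a b)) b :=
          mem_orbit_subgroup_iff.2 ⟨swap a b, mem_sup_right (mem_zpowers _), swap_apply_right a b⟩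
        exact orbit_eq_iff.1 ((orbit_eq_iff.2 hab).trans
          (orbit_eq_iff.2 (orbit_mono le_sup_left x (mem_orbit_symm.1 hx))))
      · exact ⟨⟨⟦x⟧, fun e => hx (Quotient.exact e)⟩, rfl⟩
  rw [numOrbits, numOrbits, ← Nat.card_eq_of_bijective f hf, ← Finite.card_option,
    Nat.card_congr (Equiv.optionSubtypeNe _)]

lemma le_numOrbits_sup_swap_add_one (H : Subgroup (Perm α)) (a b : α) :
    numOrbits H ≤ numOrbits (H ⊔ zpowers (swap a b)) + 1 := by
  by_cases h : b ∈ orbit H a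
  · rw [numOrbits_sup_swap_of_mem_orbit h]
    omega
  · rw [numOrbits_sup_swap_add_one h]

end Counting

section Cycles

variable [Finite α] [DecidableEq α] {H : Subgroup (Perm α)} {a b : α}

-- From `a`, the permutation `ρ * swap a b` follows the `ρ`-cycle of `b`, which avoids `a`, until
-- it is back at `b`.
lemma sameCycle_mul_swap {ρ : Perm α} (h : ¬ρ.SameCycle a b) : (ρ * swap a b).SameCycle a b := by
  have hstart : (ρ * swap a b).SameCycle a (ρ b) := ⟨1, by simp⟩
  have hwalk : ∀ j : ℕ, (ρ * swap a b).SameCycle a ((ρ ^ (j + 1)) b) := by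
    intro j
    induction j with
    | zero => simpa using hstart
    | succ j ih =>
      by_cases hb : (ρ ^ (j + 1)) b = b
      · rwa [pow_succ', mul_apply, hb]
      · have ha : (ρ ^ (j + 1)) b ≠ a := fun e =>
          h (e ▸ sameCycle_pow_right.2 (SameCycle.refl ρ b)).symm
        rw [pow_succ', mul_apply, ← swap_apply_of_ne_of_ne ha hb, ← mul_apply]
        exact sameCycle_apply_right.2 ih
  simpa [Nat.sub_add_cancel (orderOf_pos ρ), pow_orderOf_eq_one] using hwalk (orderOf ρ - 1)

lemma numOrbits_zpowers_mul_swap_le (ρ : Perm α) (a b : α) :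
    numOrbits (zpowers (ρ * swap a b)) ≤ numOrbits (zpowers ρ) + 1 :=
  calc numOrbits (zpowers (ρ * swap a b))
      ≤ numOrbits (zpowers (ρ * swap a b) ⊔ zpowers (swap a b)) + 1 :=
        le_numOrbits_sup_swap_add_one _ a b
    _ = numOrbits (zpowers ρ ⊔ zpowers (swap a b)) + 1 := by rw [zpowers_mul_sup_zpowers]
    _ ≤ numOrbits (zpowers ρ) + 1 := by grw [numOrbits_antitone le_sup_left]

lemma numOrbits_zpowers_mul_swap_add_one {ρ : Perm α} (h : ¬ρ.SameCycle a b) :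
    numOrbits (zpowers (ρ * swap a b)) + 1 = numOrbits (zpowers ρ) :=
  calc numOrbits (zpowers (ρ * swap a b)) + 1
      = numOrbits (zpowers (ρ * swap a b) ⊔ zpowers (swap a b)) + 1 := by
        rw [numOrbits_sup_swap_of_mem_orbit (mem_orbit_zpowers_iff.2 (sameCycle_mul_swap h))]
    _ = numOrbits (zpowers ρ ⊔ zpowers (swap a b)) + 1 := by rw [zpowers_mul_sup_zpowers]
    _ = numOrbits (zpowers ρ) := numOrbits_sup_swap_add_one (mt mem_orbit_zpowers_iff.1 h)

lemma numOrbits_zpowers_mul_swap_add_le {ρ : Perm α} (hρ : ρ ∈ H) (a b : α) :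
    numOrbits (zpowers (ρ * swap a b)) + 2 * numOrbits H ≤
      numOrbits (zpowers ρ) + 1 + 2 * numOrbits (H ⊔ zpowers (swap a b)) := by
  by_cases hab : b ∈ orbit H a
  · have := numOrbits_zpowers_mul_swap_le ρ a b
    rw [numOrbits_sup_swap_of_mem_orbit hab]
    omega
  · have hρab : ¬ρ.SameCycle a b := fun hρab =>
      hab (orbit_mono (zpowers_le.2 hρ) a (mem_orbit_zpowers_iff.2 hρab))
    have := numOrbits_zpowers_mul_swap_add_one hρab
    rw [← numOrbits_sup_swap_add_one hab]
    omega

lemma numOrbits_zpowers_mul_prod_add_le (π : Perm α) {L : List (Perm α)}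
    (hL : ∀ τ ∈ L, τ.IsSwap) :
    numOrbits (zpowers (π * L.prod)) + numOrbits (zpowers π) ≤
      L.length + 2 * numOrbits (closure (insert π {τ | τ ∈ L})) := by
  induction L using List.reverseRecOn with
  | nil => simp [← zpowers_eq_closure, two_mul]
  | append_singleton L τ ih =>
    obtain ⟨a, b, -, rfl⟩ := hL τ (by simp)
    have hclosure : closure (insert π {x | x ∈ L ++ [swap a b]}) =
        closure (insert π {x | x ∈ L}) ⊔ zpowers (swap a b) := by
      rw [zpowers_eq_closure, ← Subgroup.closure_union]
      congr 1
      ext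
      simp only [Set.mem_insert_iff, Set.mem_union, Set.mem_ofPred_eq, List.mem_append,
        List.mem_singleton, Set.mem_singleton_iff]
      tauto
    have hρ : π * L.prod ∈ closure (insert π {x | x ∈ L}) :=
      mul_mem (subset_closure (Set.mem_insert _ _))
        (list_prod_mem fun x hx => subset_closure (Set.mem_insert_of_mem _ hx))
    have hstep := numOrbits_zpowers_mul_swap_add_le hρ a b
    have hL' := ih fun τ hτ => hL τ (by simp [hτ])
    rw [List.prod_append, List.prod_singleton, ← mul_assoc, List.length_append,
      List.length_singleton, hclosure]
    omega

end Cycles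

section Fintype

variable [Fintype α] [DecidableEq α]

lemma numOrbits_zpowers_eq (π : Perm α) :
    numOrbits (zpowers π) = Multiset.card π.cycleType + #{x | π x = x} := by
  let F : α → {c // c ∈ π.cycleFactorsFinset} ⊕ {x // π x = x} := fun x =>
    if hx : π x = x then .inr ⟨x, hx⟩
    else .inl ⟨π.cycleOf x, cycleOf_mem_cycleFactorsFinset_iff.2 (mem_support.2 hx)⟩
  have hF : ∀ x y, F x = F y ↔ π.SameCycle x y := by
    intro x y
    by_cases hx : π x = x <;> by_cases hy : π y = y
    · simpa [F, hx, hy] using ⟨fun h => h ▸ SameCycle.refl π x, fun h => h.eq_of_left hx⟩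
    · simpa [F, hx, hy] using fun h : π.SameCycle x y => hy (h.eq_of_left hx ▸ hx)
    · simpa [F, hx, hy] using fun h : π.SameCycle x y => hx (h.eq_of_right hy ▸ hy)
    · simpa [F, hx, hy] using
        (sameCycle_iff_cycleOf_eq_of_mem_support (mem_support.2 hx) (mem_support.2 hy)).symm
  have hFsurj : F.Surjective := by
    rintro (⟨c, hc⟩ | ⟨x, hx⟩)
    · obtain ⟨x, hxc⟩ := (mem_cycleFactorsFinset_iff.1 hc).1.nonempty_support
      have hx : π x ≠ x := mem_support.1 (mem_cycleFactorsFinset_support_le hc hxc)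
      exact ⟨x, by simp [F, hx, cycle_is_cycleOf hxc hc]⟩
    · exact ⟨x, by simp [F, hx]⟩
  let G : orbitRel.Quotient (zpowers π) α → {c // c ∈ π.cycleFactorsFinset} ⊕ {x // π x = x} :=
    Quotient.lift F fun x y hxy => (hF x y).2 (mem_orbit_zpowers_iff.1 hxy).symm
  have hG : G.Bijective := by
    refine ⟨?_, fun z => ?_⟩
    · rintro ⟨x⟩ ⟨y⟩ hxy
      exact Quotient.sound (mem_orbit_zpowers_iff.2 ((hF x y).1 hxy).symm)
    · obtain ⟨x, rfl⟩ := hFsurj z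
      exact ⟨⟦x⟧, rfl⟩
  rw [numOrbits, Nat.card_eq_of_bijective G hG, Nat.card_sum, Nat.card_eq_finsetCard,
    Nat.card_eq_fintype_card, Fintype.card_subtype, cycleType, Multiset.card_map]
  rfl

lemma sign_eq_neg_one_pow_numOrbits (π : Perm α) :
    sign π = (-1) ^ (Fintype.card α + numOrbits (zpowers π)) := by
  have hcard : #π.support + #{x | π x = x} = Fintype.card α := by
    simpa [support] using card_filter_add_card_filter_not (s := univ) fun x => π x ≠ x
  rw [sign_of_cycleType, sum_cycleType, numOrbits_zpowers_eq, ← hcard,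
    show #π.support + #{x | π x = x} + (Multiset.card π.cycleType + #{x | π x = x}) =
      #π.support + Multiset.card π.cycleType + 2 * #{x | π x = x} by ring]
  simp [pow_add, pow_mul]

lemma even_card_add_numOrbits_zpowers (σ β : Perm α) :
    Even (Fintype.card α + numOrbits (zpowers σ) + numOrbits (zpowers β) +
      numOrbits (zpowers (σ * β))) := by
  have h := sign_mul σ β
  rw [sign_eq_neg_one_pow_numOrbits, sign_eq_neg_one_pow_numOrbits,
    sign_eq_neg_one_pow_numOrbits] at h
  have hsq : (-1 : ℤˣ) ^ ((Fintype.card α + numOrbits (zpowers (σ * β))) +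
      (Fintype.card α + numOrbits (zpowers σ)) + (Fintype.card α + numOrbits (zpowers β))) = 1 := by
    rw [pow_add, pow_add, mul_assoc, ← h, Int.units_mul_self]
  have heven := (neg_one_pow_eq_one_iff_even (by decide)).1 hsq
  rw [Nat.even_iff] at heven ⊢
  omega

lemma two_mul_card_cycleType_of_sq_eq_one {f : Perm α} (hf : f ^ 2 = 1) :
    2 * Multiset.card f.cycleType = #f.support := by
  rw [← sum_cycleType, cycleType_of_pow_prime_eq_one hf, Multiset.card_replicate,
    Multiset.sum_replicate, smul_eq_mul, mul_comm]

lemma exists_isSwap_list_prod_eq_of_sq_eq_one {f : Perm α} (hf : f ^ 2 = 1) :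
    ∃ L : List (Perm α), L.prod = f ∧ (∀ τ ∈ L, τ.IsSwap) ∧
      L.length = Multiset.card f.cycleType := by
  obtain ⟨L, hprod, hcycle, hdisj⟩ := (truncCycleFactors f).out
  have hL := cycleType_eq L hprod hcycle hdisj
  refine ⟨L, hprod, fun τ hτ => card_support_eq_two.1 ?_, by simp [hL]⟩
  exact pow_prime_eq_one_iff.1 hf _ (hL ▸ Multiset.mem_coe.2 (List.mem_map_of_mem hτ))

end Fintype

end Equiv.Perm

open Equiv.Perm

lemma cycleCount_eq_numOrbits {n : ℕ} (π : Equiv.Perm (Fin n)) :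
    cycleCount π = numOrbits (zpowers π) :=
  (numOrbits_zpowers_eq π).symm

theorem eulerChar_even_and_le_two_general (m : ℕ)
    (σ α : Equiv.Perm (Fin (2 * m))) (h : IsCombMap σ α) :
    Even (eulerChar σ α) ∧ eulerChar σ α ≤ 2 := by
  obtain ⟨hα, hfix, htrans⟩ := h
  have hα2 : α ^ 2 = 1 := by rwa [sq]
  have hedges : Multiset.card α.cycleType = m := by
    have := two_mul_card_cycleType_of_sq_eq_one hα2
    rw [eq_univ_of_forall fun x => mem_support.2 (hfix x), card_univ, Fintype.card_fin] at this
    omega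
  have hcα : cycleCount α = m := by simp [cycleCount, hedges, hfix]
  obtain ⟨L, hLprod, hLswap, hLlen⟩ := exists_isSwap_list_prod_eq_of_sq_eq_one hα2
  have hconn : numOrbits (closure (insert σ {τ | τ ∈ L})) ≤ 1 := by
    refine (numOrbits_antitone ((closure_le _).2 ?_)).trans (numOrbits_le_one htrans)
    rintro _ (rfl | rfl)
    · exact subset_closure (Set.mem_insert _ _)
    · rw [← hLprod]
      exact list_prod_mem fun τ hτ => subset_closure (Set.mem_insert_of_mem _ hτ)
  have hbound := numOrbits_zpowers_mul_prod_add_le σ hLswap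
  have hparity := even_card_add_numOrbits_zpowers σ α
  rw [hLprod, hLlen, hedges] at hbound
  simp only [← cycleCount_eq_numOrbits, Fintype.card_fin] at hbound hparity
  rw [Nat.even_iff] at hparity
  rw [eulerChar, hcα, Int.even_iff]
  omega

/-- The Euler characteristic of a labelled combinatorial map with `m ≥ 1` edges
is an even integer and is at most `2`. -/
theorem eulerChar_even_and_le_two (m : ℕ) (hm : 1 ≤ m)
    (σ α : Equiv.Perm (Fin (2 * m))) (h : IsCombMap σ α) :
    Even (eulerChar σ α) ∧ eulerChar σ α ≤ 2 :=
  eulerChar_even_and_le_two_general m σ α h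
end

section
/- Fix an integer d ≥ 1. In the ring of multivariate formal power series over ℚ in the variables t, v_1, …, v_d, there exists a unique pair (R, S) of formal power series, both with zero constant term, satisfying the system: R = t + t Σ_{n=1}^{d} v_n Σ_{j=1}^{⌊n/2⌋} ((n−1)!/(j!(j−1)!(n−2j)!)) R^j S^{n−2j} and S = t Σ_{n=1}^{d} v_n Σ_{j=0}^{⌊(n−1)/2⌋} ((n−1)!/((j!)²(n−2j−1)!)) R^j S^{n−2j−1}. -/
/-! Both right-hand sides are `t` times a polynomial in `R` and `S`, so the map
`(R, S) ↦ (Rrhs d R S, Srhs d R S)` is a contraction for the total-degree filtration: inputs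
agreeing below degree `n` have images agreeing below degree `n + 1`. Power series are complete
and separated for this filtration, so the iterates of `(0, 0)` converge to a fixed point, and two
fixed points agree in every degree. The constant terms vanish because of the factor `t`. -/

open MvPowerSeries

/-- Right-hand side of the equation for `R`: variable `0` is `t` and variable
`i.succ` is `v_{i+1}` (so the vertex degrees `n = i + 1` range over `1,…,d`):
`t + t Σ_{n=1}^{d} v_n Σ_{j=1}^{⌊n/2⌋} ((n−1)!/(j!(j−1)!(n−2j)!)) R^j S^{n−2j}`. -/
noncomputable def Rrhs (d : ℕ) (R S : MvPowerSeries (Fin (d + 1)) ℚ) :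
    MvPowerSeries (Fin (d + 1)) ℚ :=
  X 0 + X 0 *
    ∑ i : Fin d, X i.succ *
      ∑ j ∈ Finset.Icc 1 (((i : ℕ) + 1) / 2),
        (C : ℚ →+* MvPowerSeries (Fin (d + 1)) ℚ)
            ((((i : ℕ)).factorial : ℚ) /
              ((j.factorial : ℚ) * ((j - 1).factorial : ℚ) *
                ((((i : ℕ) + 1) - 2 * j).factorial : ℚ))) *
          R ^ j * S ^ (((i : ℕ) + 1) - 2 * j)

/-- Right-hand side of the equation for `S`:
`t Σ_{n=1}^{d} v_n Σ_{j=0}^{⌊(n−1)/2⌋} ((n−1)!/((j!)²(n−2j−1)!)) R^j S^{n−2j−1}`. -/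
noncomputable def Srhs (d : ℕ) (R S : MvPowerSeries (Fin (d + 1)) ℚ) :
    MvPowerSeries (Fin (d + 1)) ℚ :=
  X 0 *
    ∑ i : Fin d, X i.succ *
      ∑ j ∈ Finset.range ((i : ℕ) / 2 + 1),
        (C : ℚ →+* MvPowerSeries (Fin (d + 1)) ℚ)
            ((((i : ℕ)).factorial : ℚ) /
              ((j.factorial : ℚ) * (j.factorial : ℚ) *
                ((((i : ℕ) + 1) - 2 * j - 1).factorial : ℚ))) *
          R ^ j * S ^ (((i : ℕ) + 1) - 2 * j - 1)

theorem AddSubgroup.existsUnique_fixedPoint_of_contracting {A : Type*} [AddGroup A]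
    (J : ℕ → AddSubgroup A) (hJ₀ : J 0 = ⊤) (hsep : ∀ x, (∀ n, x ∈ J n) → x = 0)
    (hcomplete : ∀ x : ℕ → A, (∀ k, x k - x (k + 1) ∈ J k) → ∃ L, ∀ n, L - x n ∈ J n)
    (F : A → A) (hF : ∀ n x y, x - y ∈ J n → F x - F y ∈ J (n + 1)) :
    ∃! x, F x = x := by
  have mem_J₀ (x : A) : x ∈ J 0 := hJ₀ ▸ AddSubgroup.mem_top x
  have iterate_cauchy (k : ℕ) : F^[k] 0 - F^[k + 1] 0 ∈ J k := by
    induction k with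
    | zero => exact mem_J₀ _
    | succ k ih =>
      rw [Function.iterate_succ_apply', Function.iterate_succ_apply' F (k + 1)]
      exact hF k _ _ ih
  obtain ⟨L, hL⟩ := hcomplete _ iterate_cauchy
  have hLfix : F L = L := by
    refine sub_eq_zero.mp (hsep _ fun n => ?_)
    cases n with
    | zero => exact mem_J₀ _
    | succ n =>
      have hLn := hL (n + 1)
      rw [Function.iterate_succ_apply'] at hLn
      rw [← sub_sub_sub_cancel_right (F L) L (F (F^[n] 0))]
      exact sub_mem (hF n _ _ (hL n)) hLn
  refine ⟨L, hLfix, fun y hy => sub_eq_zero.mp (hsep _ fun n => ?_)⟩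
  induction n with
  | zero => exact mem_J₀ _
  | succ n ih => simpa only [hy, hLfix] using hF n _ _ ih

namespace MvPowerSeries

variable {σ R : Type*} [CommRing R]

def orderIdeal (n : ℕ) : Ideal (MvPowerSeries σ R) where
  carrier := {f | n ≤ f.order}
  add_mem' ha hb := (le_min ha hb).trans min_order_le_add
  zero_mem' := by simp
  smul_mem' _ _ hf := hf.trans (le_add_self.trans le_order_mul)

theorem mem_orderIdeal {n : ℕ} {f : MvPowerSeries σ R} : f ∈ orderIdeal n ↔ n ≤ f.order :=
  Iff.rfl

theorem orderIdeal_zero : orderIdeal 0 = (⊤ : Ideal (MvPowerSeries σ R)) :=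
  eq_top_iff.mpr fun f _ => mem_orderIdeal.mpr (by simp)

theorem orderIdeal_antitone : Antitone (orderIdeal : ℕ → Ideal (MvPowerSeries σ R)) :=
  fun _ _ hmn _ hf => mem_orderIdeal.mpr ((Nat.cast_le.mpr hmn).trans hf)

theorem eq_zero_of_forall_mem_orderIdeal {f : MvPowerSeries σ R}
    (hf : ∀ n, f ∈ orderIdeal n) : f = 0 :=
  order_eq_top_iff.mp (top_le_iff.mp (ENat.forall_natCast_le_iff_le.mp fun n _ => hf n))

theorem X_mul_mem_orderIdeal (i : σ) {n : ℕ} {f : MvPowerSeries σ R} (hf : f ∈ orderIdeal n) :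
    X i * f ∈ orderIdeal (n + 1) := by
  have hX : 1 ≤ (X i : MvPowerSeries σ R).order :=
    one_le_order_iff_constCoeff_eq_zero.mpr (constantCoeff_X i)
  rw [mem_orderIdeal, Nat.cast_succ, add_comm]
  exact (add_le_add hX hf).trans le_order_mul

theorem coeff_eq_of_sub_mem_orderIdeal {n : ℕ} {f g : MvPowerSeries σ R}
    (h : f - g ∈ orderIdeal n) {d : σ →₀ ℕ} (hd : d.degree < n) : coeff d f = coeff d g :=
  sub_eq_zero.mp (by rw [← map_sub]; exact coeff_of_lt_order ((Nat.cast_lt.mpr hd).trans_le h))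

theorem exists_limit_of_sub_succ_mem_orderIdeal (x : ℕ → MvPowerSeries σ R)
    (hx : ∀ k, x k - x (k + 1) ∈ orderIdeal k) :
    ∃ L, ∀ n, L - x n ∈ orderIdeal n := by
  have cauchy {k l : ℕ} (hkl : k ≤ l) : x k - x l ∈ orderIdeal k := by
    induction l, hkl using Nat.le_induction with
    | base => simp
    | succ l hkl ih =>
      rw [← sub_add_sub_cancel _ (x l)]
      exact add_mem ih (orderIdeal_antitone hkl (hx l))
  -- the coefficient of degree `|d|` is stable from stage `|d| + 1` on
  let L : MvPowerSeries σ R := fun d => coeff d (x (d.degree + 1))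
  refine ⟨L, fun n => nat_le_order fun d hd => ?_⟩
  rw [map_sub, sub_eq_zero]
  exact coeff_eq_of_sub_mem_orderIdeal (cauchy hd) (Nat.lt_succ_self _)

theorem existsUnique_fixedPoint_of_contracting_prod
    (F : MvPowerSeries σ R × MvPowerSeries σ R → MvPowerSeries σ R × MvPowerSeries σ R)
    (hF : ∀ n p q, p.1 - q.1 ∈ orderIdeal n → p.2 - q.2 ∈ orderIdeal n →
      (F p).1 - (F q).1 ∈ orderIdeal (n + 1) ∧ (F p).2 - (F q).2 ∈ orderIdeal (n + 1)) :
    ∃! p, F p = p := by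
  refine AddSubgroup.existsUnique_fixedPoint_of_contracting
    (fun n => (orderIdeal n).toAddSubgroup.prod (orderIdeal n).toAddSubgroup) ?_ ?_ ?_ F ?_
  · simp only [orderIdeal_zero, Submodule.top_toAddSubgroup, AddSubgroup.top_prod_top]
  · intro p hp
    simp only [AddSubgroup.mem_prod, Submodule.mem_toAddSubgroup] at hp
    exact Prod.ext (eq_zero_of_forall_mem_orderIdeal fun n => (hp n).1)
      (eq_zero_of_forall_mem_orderIdeal fun n => (hp n).2)
  · intro x hx
    simp only [AddSubgroup.mem_prod, Submodule.mem_toAddSubgroup, Prod.fst_sub,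
      Prod.snd_sub] at hx ⊢
    obtain ⟨L₁, hL₁⟩ := exists_limit_of_sub_succ_mem_orderIdeal _ fun k => (hx k).1
    obtain ⟨L₂, hL₂⟩ := exists_limit_of_sub_succ_mem_orderIdeal _ fun k => (hx k).2
    exact ⟨(L₁, L₂), fun n => ⟨hL₁ n, hL₂ n⟩⟩
  · intro n p q h
    simp only [AddSubgroup.mem_prod, Submodule.mem_toAddSubgroup, Prod.fst_sub,
      Prod.snd_sub] at h ⊢
    exact hF n p q h.1 h.2

end MvPowerSeries

section BDG

variable {d n : ℕ} {R S R' S' : MvPowerSeries (Fin (d + 1)) ℚ}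

theorem Rrhs_sub_Rrhs_mem_orderIdeal (hR : R - R' ∈ orderIdeal n) (hS : S - S' ∈ orderIdeal n) :
    Rrhs d R S - Rrhs d R' S' ∈ orderIdeal (n + 1) := by
  rw [Rrhs, Rrhs, add_sub_add_left_eq_sub, ← mul_sub]
  refine X_mul_mem_orderIdeal 0 ?_
  -- in the quotient by `orderIdeal n` the congruences become equalities to substitute
  rw [← Ideal.Quotient.eq] at hR hS ⊢
  simp only [map_sum, map_mul, map_pow, hR, hS]

theorem Srhs_sub_Srhs_mem_orderIdeal (hR : R - R' ∈ orderIdeal n) (hS : S - S' ∈ orderIdeal n) :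
    Srhs d R S - Srhs d R' S' ∈ orderIdeal (n + 1) := by
  rw [Srhs, Srhs, ← mul_sub]
  refine X_mul_mem_orderIdeal 0 ?_
  rw [← Ideal.Quotient.eq] at hR hS ⊢
  simp only [map_sum, map_mul, map_pow, hR, hS]

theorem constantCoeff_Rrhs : constantCoeff (Rrhs d R S) = 0 := by
  simp [Rrhs]

theorem constantCoeff_Srhs : constantCoeff (Srhs d R S) = 0 := by
  simp [Srhs]

end BDG

theorem existsUnique_RS_general (d : ℕ) :
    ∃! p : MvPowerSeries (Fin (d + 1)) ℚ × MvPowerSeries (Fin (d + 1)) ℚ,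
      (constantCoeff : MvPowerSeries (Fin (d + 1)) ℚ →+* ℚ) p.1 = 0 ∧
      (constantCoeff : MvPowerSeries (Fin (d + 1)) ℚ →+* ℚ) p.2 = 0 ∧
      p.1 = Rrhs d p.1 p.2 ∧ p.2 = Srhs d p.1 p.2 := by
  obtain ⟨p, hp, huniq⟩ := existsUnique_fixedPoint_of_contracting_prod
    (fun p => (Rrhs d p.1 p.2, Srhs d p.1 p.2)) fun _ _ _ hR hS =>
      ⟨Rrhs_sub_Rrhs_mem_orderIdeal hR hS, Srhs_sub_Srhs_mem_orderIdeal hR hS⟩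
  have hp₁ : p.1 = Rrhs d p.1 p.2 := congrArg Prod.fst hp.symm
  have hp₂ : p.2 = Srhs d p.1 p.2 := congrArg Prod.snd hp.symm
  refine ⟨p, ⟨?_, ?_, hp₁, hp₂⟩, fun q hq => huniq q (Prod.ext hq.2.2.1.symm hq.2.2.2.symm)⟩
  · rw [hp₁]; exact constantCoeff_Rrhs
  · rw [hp₂]; exact constantCoeff_Srhs

/-- There is a unique pair `(R, S)` of formal power series in
`ℚ[[t, v_1, …, v_d]]`, both with zero constant term, satisfying the system of
theorem of Bender–Canfield / Bouttier–Di Francesco–Guitter. -/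
theorem existsUnique_RS (d : ℕ) (hd : 1 ≤ d) :
    ∃! p : MvPowerSeries (Fin (d + 1)) ℚ × MvPowerSeries (Fin (d + 1)) ℚ,
      (constantCoeff : MvPowerSeries (Fin (d + 1)) ℚ →+* ℚ) p.1 = 0 ∧
      (constantCoeff : MvPowerSeries (Fin (d + 1)) ℚ →+* ℚ) p.2 = 0 ∧
      p.1 = Rrhs d p.1 p.2 ∧ p.2 = Srhs d p.1 p.2 :=
  existsUnique_RS_general d
end

section
/- Let R ∈ ℚ[[t]] be the unique formal power series with zero constant term satisfying R = t + 3tR². Then R − R³ = Σ_{k≥0} (2(2k)!/(k!(k+2)!)) · 3^k · t^{2k+1} in ℚ[[t]]. -/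
/-!
Write `C = Σ catalan k xᵏ`, so that `C = 1 + x C²`. Then `t C(3t²)` solves `R = t + 3tR²`, and it
is the only solution: the difference `D` of two solutions satisfies `D = t G D`, so every power
of `t` divides `D`. Using `C = 1 + x C²` once more, `3 (R - R³) = t (4C - C²)(3t²)`, and the
coefficient `4 catalan k - catalan (k + 1)` equals `6 (2k)! / (k! (k + 2)!)`.
-/

open PowerSeries
open scoped Nat

section
variable {K : Type*} [Field K] [CharZero K]

theorem cast_catalan_eq_factorial_div (n : ℕ) :
    (catalan n : K) = (2 * n)! / (n ! * (n + 1)!) := by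
  have h := congrArg (Nat.cast : ℕ → K) (succ_mul_catalan_eq_centralBinom n)
  rw [Nat.centralBinom_eq_two_mul_choose, Nat.cast_choose K (by omega : n ≤ 2 * n),
    show 2 * n - n = n by omega] at h
  push_cast at h
  rw [Nat.factorial_succ]
  push_cast
  field_simp
  linear_combination h

theorem four_mul_catalan_sub_catalan_succ (n : ℕ) :
    4 * (catalan n : K) - catalan (n + 1) = 6 * (2 * n)! / (n ! * (n + 2)!) := by
  rw [cast_catalan_eq_factorial_div, cast_catalan_eq_factorial_div,
    show 2 * (n + 1) = 2 * n + 1 + 1 by ring, show n + 2 = n + 1 + 1 by ring]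
  simp only [Nat.factorial_succ]
  push_cast
  have : (n : K) + 1 + 1 ≠ 0 := by norm_cast
  field_simp
  ring

end

namespace PowerSeries

theorem coeff_catalanSeries_sq (n : ℕ) : coeff n (catalanSeries ^ 2) = catalan (n + 1) := by
  rw [← coeff_succ_mul_X, ← catalanSeries_coeff (n + 1)]
  conv_rhs => rw [← catalanSeries_sq_mul_X_add_one]
  simp

section
variable {A : Type*} [CommSemiring A]

theorem eq_zero_of_eq_X_mul_mul {D G : A⟦X⟧} (h : D = X * G * D) : D = 0 := by
  have hdvd : ∀ n, X ^ n ∣ D := by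
    intro n
    induction n with
    | zero => exact one_dvd D
    | succ n ih =>
      rw [h, pow_succ', mul_assoc]
      exact mul_dvd_mul_left X (dvd_mul_of_dvd_right ih G)
  ext n
  exact X_pow_dvd_iff.mp (hdvd (n + 1)) n n.lt_succ_self

end

section
variable {A : Type*} [CommRing A]

theorem eq_of_eq_X_add_mul_X_mul_sq {c F G : A⟦X⟧}
    (hF : F = X + c * X * F ^ 2) (hG : G = X + c * X * G ^ 2) : F = G := by
  have hD : F - G = X * (c * (F + G)) * (F - G) := by linear_combination hF - hG
  exact sub_eq_zero.mp (eq_zero_of_eq_X_mul_mul hD)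

noncomputable def substScaledSq (a : A) : A⟦X⟧ →+* A⟦X⟧ :=
  (expand 2 two_ne_zero).toRingHom.comp (rescale a)

theorem substScaledSq_X (a : A) : substScaledSq a X = C a * X ^ 2 := by
  simp [substScaledSq, rescale_X, expand_C]

theorem coeff_X_mul_substScaledSq (a : A) (f : A⟦X⟧) (n : ℕ) :
    coeff n (X * substScaledSq a f) = if n % 2 = 1 then a ^ (n / 2) * coeff (n / 2) f else 0 := by
  rcases n with _ | m
  · simp
  · rw [coeff_succ_X_mul, substScaledSq, RingHom.comp_apply, AlgHom.toRingHom_eq_coe,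
      RingHom.coe_coe, coeff_expand, coeff_rescale]
    by_cases hm : 2 ∣ m
    · have hdiv : (m + 1) / 2 = m / 2 := by omega
      rw [if_pos hm, if_pos (by omega), hdiv]
    · rw [if_neg hm, if_neg (by omega)]

theorem substScaledSq_map_catalanSeries (a : A) :
    substScaledSq a (catalanSeries.map (Nat.castRingHom A)) =
      1 + C a * X ^ 2 * substScaledSq a (catalanSeries.map (Nat.castRingHom A)) ^ 2 := by
  have h := congrArg (fun f => substScaledSq a (f.map (Nat.castRingHom A)))
    catalanSeries_sq_mul_X_add_one
  simp only [map_add, map_mul, map_pow, map_X, map_one, substScaledSq_X] at h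
  linear_combination -h

end

theorem four_mul_map_catalanSeries_sub_sq {K : Type*} [Field K] [CharZero K] :
    4 * catalanSeries.map (Nat.castRingHom K) - catalanSeries.map (Nat.castRingHom K) ^ 2 =
      3 * mk fun n => 2 * ((2 * n)! : K) / ((n ! : K) * ((n + 2)! : K)) := by
  ext n
  rw [← map_ofNat C 4, ← map_ofNat C 3, map_sub, coeff_C_mul, coeff_C_mul, coeff_mk, ← map_pow,
    coeff_map, coeff_map, coeff_catalanSeries_sq, catalanSeries_coeff, eq_natCast, eq_natCast,
    four_mul_catalan_sub_catalan_succ]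
  ring

end PowerSeries

theorem tetravalent_generating_function_general (R : PowerSeries ℚ)
    (hR : R = X + 3 * X * R ^ 2) :
    R - R ^ 3 =
      PowerSeries.mk fun n =>
        if n % 2 = 1 then
          (2 * ((2 * (n / 2)).factorial : ℚ) /
              (((n / 2).factorial : ℚ) * ((n / 2 + 2).factorial : ℚ))) *
            (3 : ℚ) ^ (n / 2)
        else 0 := by
  set P := substScaledSq (3 : ℚ) (catalanSeries.map (Nat.castRingHom ℚ))
  set Q := substScaledSq (3 : ℚ) (mk fun n => 2 * ((2 * n)! : ℚ) / ((n ! : ℚ) * ((n + 2)! : ℚ)))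
  have hP : P = 1 + 3 * X ^ 2 * P ^ 2 := by
    simpa only [map_ofNat] using substScaledSq_map_catalanSeries (3 : ℚ)
  have hPQ : 4 * P - P ^ 2 = 3 * Q := by
    simpa only [map_sub, map_mul, map_pow, map_ofNat] using
      congrArg (substScaledSq (3 : ℚ)) four_mul_map_catalanSeries_sub_sq
  have hRP : R = X * P := eq_of_eq_X_add_mul_X_mul_sq hR (by linear_combination X * hP)
  have hRQ : R - R ^ 3 = X * Q := by
    refine mul_left_cancel₀ (show (3 : ℚ⟦X⟧) ≠ 0 by rw [← map_ofNat C 3]; simp) ?_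
    rw [hRP]
    linear_combination X * hPQ + X * P * hP
  ext n
  rw [hRQ, coeff_X_mul_substScaledSq, coeff_mk, coeff_mk, mul_comm]

/-- If `R ∈ ℚ[[t]]` is the power series with zero constant term satisfying
`R = t + 3tR²`, then `R − R³ = Σ_{k≥0} (2(2k)!/(k!(k+2)!)) 3^k t^{2k+1}`,
the generating series of rooted planar tetravalent maps (up to a factor `t`). -/
theorem tetravalent_generating_function (R : PowerSeries ℚ)
    (h0 : constantCoeff R = 0) (hR : R = X + 3 * X * R ^ 2) :
    R - R ^ 3 =
      PowerSeries.mk fun n =>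
        if n % 2 = 1 then
          (2 * ((2 * (n / 2)).factorial : ℚ) /
              (((n / 2).factorial : ℚ) * ((n / 2 + 2).factorial : ℚ))) *
            (3 : ℚ) ^ (n / 2)
        else 0 :=
  tetravalent_generating_function_general R hR
end

section
/- Let R, S ∈ ℚ[[t]] be formal power series with zero constant term satisfying S = t(S² + 2R) and R = t + 2tRS. Then 2t³ = tS(1 − tS)(1 − 2tS), i.e. t³ = tS(1 − tS)(1 − 2tS)/2, in ℚ[[t]]. -/
open PowerSeries

/-- Multiplying `S = t(S² + 2R)` by `1 − 2tS` and using `R(1 − 2tS) = t` eliminates `R`. -/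
theorem two_mul_pow_three_eq_of_trivalent_system {A : Type*} [CommRing A] {t R S : A}
    (hS : S = t * (S ^ 2 + 2 * R)) (hR : R = t + 2 * t * R * S) :
    2 * t ^ 3 = t * S * (1 - t * S) * (1 - 2 * t * S) := by
  linear_combination (-(t * (1 - 2 * t * S))) * hS + (-(2 * t ^ 2)) * hR

theorem trivalent_cubic_equation_general (R S : PowerSeries ℚ)
    (hS : S = X * (S ^ 2 + 2 * R)) (hR : R = X + 2 * X * R * S) :
    2 * X ^ 3 = X * S * (1 - X * S) * (1 - 2 * X * S) ∧
    (X : PowerSeries ℚ) ^ 3 = X * S * (1 - X * S) * (1 - 2 * X * S) * C (1 / 2 : ℚ) := by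
  have cubic := two_mul_pow_three_eq_of_trivalent_system hS hR
  refine ⟨cubic, ?_⟩
  rw [← cubic, mul_right_comm, ← map_ofNat C 2, ← map_mul]
  norm_num

/-- For the cubic potential, the auxiliary series `R, S ∈ ℚ[[t]]` (with zero
constant term) satisfying `S = t(S² + 2R)` and `R = t + 2tRS` obey the cubic
equation `2t³ = tS(1 − tS)(1 − 2tS)`, i.e. `t³ = tS(1 − tS)(1 − 2tS)/2`. -/
theorem trivalent_cubic_equation (R S : PowerSeries ℚ)
    (hR0 : constantCoeff R = 0) (hS0 : constantCoeff S = 0)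
    (hS : S = X * (S ^ 2 + 2 * R)) (hR : R = X + 2 * X * R * S) :
    2 * X ^ 3 = X * S * (1 - X * S) * (1 - 2 * X * S) ∧
    (X : PowerSeries ℚ) ^ 3 = X * S * (1 - X * S) * (1 - 2 * X * S) * C (1 / 2 : ℚ) :=
  trivalent_cubic_equation_general R S hS hR
end

section
/- (Wick/Isserlis theorem.) Let r ≥ 0 and n ≥ 1 be integers, let γ be the product measure on ℝ^r of r copies of the standard Gaussian measure (mean 0, variance 1), and let A be a real matrix with rows indexed by {1,…,2n} and columns indexed by {1,…,r}. For q ∈ {1,…,2n} define the linear function X_q(z) = Σ_{s=1}^{r} A_{q,s} z_s on ℝ^r, and set C = A·Aᵀ, so that C_{q,q'} = ∫ X_q X_{q'} dγ. Then ∫_{ℝ^r} Π_{q=1}^{2n} X_q(z) dγ(z) = Σ_α Π_{q : q < α(q)} C_{q, α(q)}, where the sum runs over all involutions α of {1,…,2n} without fixed points (pairwise matchings of the 2n factors) and the product runs over the n pairs {q, α(q)} of each matching. -/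
/-!
Expanding each `X_q = ∑ₛ A_{q,s} zₛ` writes `∏_q X_q` as a sum over colourings `f : q ↦ s` of
`∏_q A_{q,f q}` times the monomial `∏ₛ zₛ ^ #f⁻¹(s)`. Under the product Gaussian the monomial
integrates to `∏ₛ m(#f⁻¹(s))`, where the Gaussian moment `m(k)` (computed by Stein's integration by
parts, `m(k+2) = (k+1) m(k)`) equals the number of perfect matchings of a `k`-set. That product
therefore counts the matchings `α` of the factors with `f ∘ α = f`, one fibre of `f` at a time.
Exchanging the two sums and summing, for fixed `α`, over the colourings constant on its pairs
rebuilds `∏_{q < α q} ∑ₛ A_{q,s} A_{α q,s} = ∏_{q < α q} C_{q, α q}`.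
-/

open Finset Equiv
open scoped Nat

/-- The number of perfect matchings of a `k`-element set; at `k = 0` the truncated `0 - 1 = 0`
gives `0‼ = 1`, as it should. -/
def pairingCount (k : ℕ) : ℕ := if Even k then (k - 1)‼ else 0

lemma pairingCount_of_odd {k : ℕ} (hk : Odd k) : pairingCount k = 0 := by
  simp [pairingCount, Nat.not_even_iff_odd.mpr hk]

lemma pairingCount_add_two (k : ℕ) : pairingCount (k + 2) = (k + 1) * pairingCount k := by
  rcases Nat.even_or_odd k with hk | hk
  · simp only [pairingCount, hk, hk.add even_two, if_true]
    exact Nat.doubleFactorial_add_one k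
  · rw [pairingCount_of_odd hk, pairingCount_of_odd (hk.add_even even_two), mul_zero]

lemma two_pow_mul_factorial_mul_pairingCount (m : ℕ) :
    2 ^ m * m ! * pairingCount (2 * m) = (2 * m)! := by
  rcases m with _ | m
  · rfl
  · rw [pairingCount, if_pos (even_two_mul _), ← Nat.doubleFactorial_two_mul,
      show 2 * (m + 1) = 2 * m + 1 + 1 by ring, Nat.factorial_eq_mul_doubleFactorial]
    rfl

def pairings (α : Type*) [Fintype α] [DecidableEq α] : Finset (Perm α) :=
  {σ | σ * σ = 1 ∧ ∀ a, σ a ≠ a}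

def permFiberwiseEquiv {α κ : Type*} (f : α → κ) :
    {σ : Perm α // f ∘ σ = f} ≃ ∀ s, Perm {a // f a = s} :=
  (subtypeEquiv DomMulAct.mk fun _ => DomMulAct.mem_stabilizer_iff.symm).trans
    (MulOpposite.opEquiv.trans (DomMulAct.stabilizerMulEquiv f).toEquiv)

lemma permFiberwiseEquiv_apply_coe {α κ : Type*} (f : α → κ) (σ : {σ : Perm α // f ∘ σ = f})
    (s : κ) (a : {a // f a = s}) : (permFiberwiseEquiv f σ s a : α) = σ.1 a :=
  rfl

section Pairings

variable {α : Type*} [Fintype α] [DecidableEq α]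

lemma mem_pairings {σ : Perm α} : σ ∈ pairings α ↔ σ * σ = 1 ∧ ∀ a, σ a ≠ a := by
  simp [pairings]

lemma mem_pairings_iff_forall {σ : Perm α} :
    σ ∈ pairings α ↔ ∀ a, σ (σ a) = a ∧ σ a ≠ a := by
  simp [mem_pairings, Perm.ext_iff, forall_and]

lemma mem_pairings_iff_cycleType {σ : Perm α} :
    σ ∈ pairings α ↔ σ.cycleType = Multiset.replicate σ.cycleType.card 2 ∧
      2 * σ.cycleType.card = Fintype.card α := by
  rw [mem_pairings, ← sq, Perm.pow_prime_eq_one_iff, Multiset.eq_replicate, and_iff_right rfl]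
  refine and_congr_right fun h2 => ?_
  have hsum : σ.cycleType.sum = 2 * σ.cycleType.card := by
    rw [Multiset.eq_replicate_card.mpr h2, Multiset.sum_replicate, Multiset.card_replicate,
      smul_eq_mul, mul_comm]
  rw [← hsum, Perm.sum_cycleType, card_eq_iff_eq_univ, eq_univ_iff_forall]
  simp only [Perm.mem_support]

theorem card_pairings : #(pairings α) = pairingCount (Fintype.card α) := by
  obtain ⟨m, hm | hm⟩ := Nat.even_or_odd' (Fintype.card α)
  · -- the pairings are the permutations of cycle type `2 ^ m`; there are `(2m)! / (2^m m!)` of them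
    have hcycleType : pairings α = ({σ | σ.cycleType = .replicate m 2} : Finset (Perm α)) := by
      ext σ
      rw [mem_pairings_iff_cycleType, hm, mem_filter]
      constructor
      · rintro ⟨h, hcard⟩
        rw [h, Nat.mul_left_cancel two_pos hcard]
        exact ⟨mem_univ _, rfl⟩
      · rintro ⟨-, h⟩
        simp [h]
    have hcount : ∏ x ∈ (Multiset.replicate m 2).toFinset,
        (Multiset.count x (Multiset.replicate m 2))! = m ! := by
      rcases eq_or_ne m 0 with rfl | h <;> simp [*]
    have key := Perm.card_of_cycleType_mul_eq α (Multiset.replicate m 2)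
    rw [if_pos (by simp [hm, mul_comm, Multiset.mem_replicate]), ← hcycleType, hcount] at key
    simp only [hm, Multiset.sum_replicate, Multiset.prod_replicate, smul_eq_mul, mul_comm m,
      Nat.sub_self, Nat.factorial_zero, one_mul] at key
    rw [hm]
    refine Nat.eq_of_mul_eq_mul_left (by positivity : 0 < 2 ^ m * m !) ?_
    rw [two_pow_mul_factorial_mul_pairingCount, ← key, mul_comm]
  · rw [hm, pairingCount_of_odd (odd_two_mul_add_one m), card_eq_zero, eq_empty_iff_forall_notMem]
    intro σ hσ
    rw [mem_pairings_iff_cycleType, hm] at hσ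
    omega

theorem card_pairings_comp_eq {κ : Type*} [Fintype κ] [DecidableEq κ] (f : α → κ) :
    #((pairings α).filter fun σ : Perm α => f ∘ σ = f) = ∏ s, pairingCount #{a | f a = s} := by
  have key (σ : {σ : Perm α // f ∘ σ = f}) :
      σ.1 ∈ pairings α ↔ ∀ s, permFiberwiseEquiv f σ s ∈ pairings _ := by
    simp only [mem_pairings_iff_forall, ne_eq, Subtype.ext_iff, permFiberwiseEquiv_apply_coe]
    exact ⟨fun h s a => h a, fun h a => h (f a) ⟨a, rfl⟩⟩
  calc #((pairings α).filter fun σ : Perm α => f ∘ σ = f)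
      = Nat.card {τ : {σ : Perm α // f ∘ σ = f} // τ.1 ∈ pairings α} := by
        rw [← Nat.card_eq_finsetCard]
        exact Nat.card_congr ((subtypeSubtypeEquivSubtypeInter _ _).trans
          (subtypeEquivRight fun σ => by rw [mem_filter, and_comm])).symm
    _ = Nat.card (∀ s, {β : Perm {a // f a = s} // β ∈ pairings _}) :=
        Nat.card_congr ((subtypeEquiv (permFiberwiseEquiv f) key).trans subtypePiEquivPi)
    _ = ∏ s, pairingCount #{a | f a = s} := by
        simp only [Nat.card_pi, Nat.card_eq_finsetCard, card_pairings, Fintype.card_subtype]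

end Pairings

section Pairs

variable {ι : Type*} [Fintype ι] [LinearOrder ι] {σ : Perm ι}

lemma apply_lt_apply_apply_iff_not_lt (hσ : σ ∈ pairings ι) (q : ι) :
    σ q < σ (σ q) ↔ ¬q < σ q := by
  rw [((mem_pairings_iff_forall.mp hσ) q).1, not_lt]
  exact ⟨le_of_lt, fun h => lt_of_le_of_ne h ((mem_pairings_iff_forall.mp hσ) q).2⟩

lemma prod_eq_prod_filter_lt_mul {M : Type*} [CommMonoid M] (hσ : σ ∈ pairings ι) (F : ι → M) :
    ∏ q, F q = ∏ q ∈ {q | q < σ q}, F q * F (σ q) := by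
  rw [prod_mul_distrib, ← prod_filter_mul_prod_filter_not univ (fun q => q < σ q)]
  congr 1
  have hinv q : σ (σ q) = q := (mem_pairings_iff_forall.mp hσ q).1
  refine prod_nbij' σ σ ?_ ?_ ?_ ?_ ?_ <;>
    simp [hinv, ← apply_lt_apply_apply_iff_not_lt hσ]

def pairInvariantEquiv (hσ : σ ∈ pairings ι) (κ : Type*) :
    {f : ι → κ // f ∘ σ = f} ≃ (({q | q < σ q} : Finset ι) → κ) where
  toFun f q := f.1 q
  invFun g := ⟨fun q => if h : q < σ q then g ⟨q, by simpa using h⟩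
    else g ⟨σ q, by simpa [apply_lt_apply_apply_iff_not_lt hσ] using h⟩, by
      ext q
      have hinv : σ (σ q) = q := (mem_pairings_iff_forall.mp hσ q).1
      by_cases h : q < σ q
      · simp [h, lt_asymm h, hinv]
      · simp [h, apply_lt_apply_apply_iff_not_lt hσ]⟩
  left_inv f := by
    ext q
    dsimp only
    split_ifs
    · rfl
    · exact congrFun f.2 q
  right_inv g := by
    ext q
    simp [(mem_filter.mp q.2).2]

lemma pairInvariantEquiv_symm_apply_coe (hσ : σ ∈ pairings ι) {κ : Type*}
    (g : ({q | q < σ q} : Finset ι) → κ) (q : ({q | q < σ q} : Finset ι)) :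
    ((pairInvariantEquiv hσ κ).symm g).1 q = g q := by
  simp [pairInvariantEquiv, (mem_filter.mp q.2).2]

theorem prod_filter_lt_sum_mul {R κ : Type*} [CommSemiring R] [Fintype κ] [DecidableEq κ]
    (hσ : σ ∈ pairings ι) (A : ι → κ → R) :
    ∏ q ∈ {q | q < σ q}, ∑ s, A q s * A (σ q) s =
      ∑ f : ι → κ with f ∘ σ = f, ∏ q, A q (f q) := by
  rw [sum_subtype _ fun f => by rw [mem_filter, and_iff_right (mem_univ f)],
    ← prod_coe_sort _ fun q => ∑ s, A q s * A (σ q) s, Fintype.prod_sum]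
  refine Fintype.sum_equiv (pairInvariantEquiv hσ κ).symm _ _ fun g => ?_
  rw [prod_eq_prod_filter_lt_mul hσ]
  refine Eq.trans (Fintype.prod_congr _ _ fun q => ?_) (prod_coe_sort _ _)
  have hinvariant := congrFun ((pairInvariantEquiv hσ κ).symm g).2 q
  rw [Function.comp_apply] at hinvariant
  rw [hinvariant, pairInvariantEquiv_symm_apply_coe]

end Pairs

section GaussianMoments

open MeasureTheory ProbabilityTheory

lemma integrable_gaussianReal_iff {μ : ℝ} {v : NNReal} (hv : v ≠ 0) {g : ℝ → ℝ} :
    Integrable g (gaussianReal μ v) ↔ Integrable fun x => gaussianPDFReal μ v x * g x := by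
  rw [gaussianReal_of_var_ne_zero μ hv, integrable_withDensity_iff_integrable_smul'
    (measurable_gaussianPDF μ v) (ae_of_all _ fun _ => gaussianPDF_lt_top)]
  simp [toReal_gaussianPDF]

lemma integrable_pow_gaussianReal (μ : ℝ) (v : NNReal) (k : ℕ) :
    Integrable (fun x => x ^ k) (gaussianReal μ v) :=
  ((memLp_id_gaussianReal k).integrable_norm_pow').mono' (by fun_prop)
    (ae_of_all _ fun x => by simp [norm_pow])

lemma hasDerivAt_gaussianPDFReal (μ : ℝ) (v : NNReal) (x : ℝ) :
    HasDerivAt (gaussianPDFReal μ v) (-((x - μ) / v) * gaussianPDFReal μ v x) x := by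
  have hexp : HasDerivAt (fun x => -(x - μ) ^ 2 / (2 * v)) (-((x - μ) / v)) x := by
    refine ((((hasDerivAt_id' x).sub_const μ).pow 2).neg.div_const (2 * (v : ℝ))).congr_deriv ?_
    rcases eq_or_ne (v : ℝ) 0 with hv | hv
    · simp [hv]
    · field_simp
      ring
  exact (hexp.exp.const_mul _).congr_deriv (by rw [gaussianPDFReal]; ring)

/-- Stein's identity `𝔼[X g(X)] = 𝔼[g'(X)]` for `g(x) = x ^ (k + 1)`, from `φ' = -x φ`. -/
lemma integral_pow_add_two_gaussianReal (k : ℕ) :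
    ∫ x, x ^ (k + 2) ∂gaussianReal 0 1 = (k + 1) * ∫ x, x ^ k ∂gaussianReal 0 1 := by
  have hint (j : ℕ) : Integrable fun x => gaussianPDFReal 0 1 x * x ^ j :=
    (integrable_gaussianReal_iff one_ne_zero).mp (integrable_pow_gaussianReal 0 1 j)
  have hu (x : ℝ) : HasDerivAt (fun x : ℝ => x ^ (k + 1)) ((k + 1) * x ^ k) x := by
    simpa using hasDerivAt_pow (k + 1) x
  have ibp := integral_mul_deriv_eq_deriv_mul_of_integrable (fun x _ => hu x)
    (fun x _ => hasDerivAt_gaussianPDFReal 0 1 x) ?_ ?_ ?_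
  · simp only [integral_gaussianReal_eq_integral_smul one_ne_zero, smul_eq_mul]
    simp only [sub_zero, NNReal.coe_one, div_one] at ibp
    calc ∫ x, gaussianPDFReal 0 1 x * x ^ (k + 2)
        = -∫ x, x ^ (k + 1) * (-x * gaussianPDFReal 0 1 x) := by
          rw [← integral_neg]; congr 1 with x; ring
      _ = (k + 1) * ∫ x, gaussianPDFReal 0 1 x * x ^ k := by
          rw [ibp, neg_neg, ← integral_const_mul]; congr 1 with x; ring
  · exact (hint (k + 2)).neg.congr (ae_of_all _ fun x => by simp; ring)
  · exact ((hint k).const_mul (k + 1)).congr (ae_of_all _ fun x => by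
      simp only [Pi.mul_apply]; ring)
  · exact (hint (k + 1)).congr (ae_of_all _ fun x => by simp only [Pi.mul_apply]; ring)

theorem integral_pow_gaussianReal (k : ℕ) :
    ∫ x, x ^ k ∂gaussianReal 0 1 = pairingCount k := by
  induction k using Nat.twoStepInduction with
  | zero => simp [pairingCount]
  | one => simp [pairingCount_of_odd odd_one]
  | more k ih _ =>
    rw [integral_pow_add_two_gaussianReal, ih, pairingCount_add_two]
    push_cast
    ring

end GaussianMoments

section GaussianVector

open MeasureTheory ProbabilityTheory
open scoped Matrix

variable {ι κ : Type*} [Fintype ι] [Fintype κ]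

lemma integral_prod_pow_pi_gaussianReal (m : κ → ℕ) :
    ∫ z : κ → ℝ, ∏ s, z s ^ m s ∂(Measure.pi fun _ => gaussianReal 0 1) =
      ∏ s, (pairingCount (m s) : ℝ) := by
  rw [integral_fintype_prod_eq_prod (f := fun s x => x ^ m s)]
  simp only [integral_pow_gaussianReal]

lemma integrable_prod_pow_pi_gaussianReal (m : κ → ℕ) :
    Integrable (fun z : κ → ℝ => ∏ s, z s ^ m s) (Measure.pi fun _ => gaussianReal 0 1) :=
  Integrable.fintype_prod (f := fun s x => x ^ m s) fun s => integrable_pow_gaussianReal 0 1 (m s)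

lemma prod_sum_mul_eq_sum_prod_pow [DecidableEq ι] [DecidableEq κ] {R : Type*} [CommSemiring R]
    (A : ι → κ → R) (z : κ → R) :
    ∏ q, ∑ s, A q s * z s = ∑ f : ι → κ, (∏ q, A q (f q)) * ∏ s, z s ^ #{q | f q = s} := by
  rw [Fintype.prod_sum]
  refine Fintype.sum_congr _ _ fun f => ?_
  rw [prod_mul_distrib, ← prod_fiberwise' univ f z]
  simp only [prod_const]

theorem integral_prod_linear_pi_gaussianReal_eq_sum [DecidableEq ι] [DecidableEq κ]
    (A : Matrix ι κ ℝ) :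
    ∫ z : κ → ℝ, ∏ q, ∑ s, A q s * z s ∂(Measure.pi fun _ => gaussianReal 0 1) =
      ∑ f : ι → κ, (∏ q, A q (f q)) * ∏ s, (pairingCount #{q | f q = s} : ℝ) := by
  simp_rw [prod_sum_mul_eq_sum_prod_pow A]
  rw [integral_finsetSum _ fun f _ => (integrable_prod_pow_pi_gaussianReal _).const_mul _]
  simp only [integral_const_mul, integral_prod_pow_pi_gaussianReal]

theorem integral_prod_linear_pi_gaussianReal [LinearOrder ι] [DecidableEq κ] (A : Matrix ι κ ℝ) :
    ∫ z : κ → ℝ, ∏ q, ∑ s, A q s * z s ∂(Measure.pi fun _ => gaussianReal 0 1) =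
      ∑ σ ∈ pairings ι, ∏ q ∈ {q | q < σ q}, (A * Aᵀ) q (σ q) := by
  rw [integral_prod_linear_pi_gaussianReal_eq_sum]
  calc ∑ f : ι → κ, (∏ q, A q (f q)) * ∏ s, (pairingCount #{q | f q = s} : ℝ)
      = ∑ f : ι → κ, ∑ σ ∈ pairings ι, if f ∘ σ = f then ∏ q, A q (f q) else 0 := by
        refine Fintype.sum_congr _ _ fun f => ?_
        rw [← sum_filter, sum_const, nsmul_eq_mul, card_pairings_comp_eq, mul_comm]
        push_cast
        rfl
    _ = ∑ σ ∈ pairings ι, ∏ q ∈ {q | q < σ q}, ∑ s, A q s * A (σ q) s := by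
        rw [sum_comm]
        refine sum_congr rfl fun σ hσ => ?_
        rw [← sum_filter]
        exact (prod_filter_lt_sum_mul hσ A).symm
    _ = ∑ σ ∈ pairings ι, ∏ q ∈ {q | q < σ q}, (A * Aᵀ) q (σ q) := by
        simp only [Matrix.mul_apply, Matrix.transpose_apply]

lemma pairings_fin_two : pairings (Fin 2) = {swap 0 1} := by decide

theorem integral_mul_linear_pi_gaussianReal [DecidableEq κ] (u w : κ → ℝ) :
    ∫ z : κ → ℝ, (∑ s, u s * z s) * (∑ s, w s * z s) ∂(Measure.pi fun _ => gaussianReal 0 1) =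
      ∑ s, u s * w s := by
  have h := integral_prod_linear_pi_gaussianReal (Matrix.of ![u, w])
  rw [pairings_fin_two, sum_singleton, show ({q | q < swap 0 1 q} : Finset (Fin 2)) = {0} by
    decide, prod_singleton] at h
  simpa [Fin.prod_univ_two, Matrix.mul_apply] using h

end GaussianVector

open MeasureTheory ProbabilityTheory

open scoped Classical

theorem wick_isserlis_general (r n : ℕ)
    (A : Matrix (Fin (2 * n)) (Fin r) ℝ) :
    (∀ q q' : Fin (2 * n),
        (A * A.transpose) q q' =
          ∫ z : Fin r → ℝ, (∑ s, A q s * z s) * (∑ s, A q' s * z s)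
            ∂(Measure.pi fun _ : Fin r => gaussianReal 0 1)) ∧
    (∫ z : Fin r → ℝ, ∏ q : Fin (2 * n), ∑ s, A q s * z s
        ∂(Measure.pi fun _ : Fin r => gaussianReal 0 1)) =
      ∑ α ∈ Finset.univ.filter
          (fun α : Equiv.Perm (Fin (2 * n)) => α * α = 1 ∧ ∀ q, α q ≠ q),
        ∏ q ∈ Finset.univ.filter (fun q : Fin (2 * n) => q < α q),
          (A * A.transpose) q (α q) := by
  refine ⟨fun q q' => ?_, ?_⟩
  · rw [integral_mul_linear_pi_gaussianReal, Matrix.mul_apply]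
    rfl
  · convert integral_prod_linear_pi_gaussianReal A using 2
    ext σ
    rw [mem_pairings, mem_filter, and_iff_right (mem_univ σ)]

/-- Wick/Isserlis theorem: the expectation under a product of standard
Gaussians of a product of `2n` centered jointly Gaussian linear forms
`X_q(z) = Σ_s A_{q,s} z_s` equals the sum, over all fixed-point-free
involutions (pairwise matchings) `α` of `{1,…,2n}`, of the product of the
pairwise covariances `C_{q,α(q)}`, where `C = AAᵀ` is the covariance matrix. -/
theorem wick_isserlis (r n : ℕ) (hn : 1 ≤ n)
    (A : Matrix (Fin (2 * n)) (Fin r) ℝ) :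
    (∀ q q' : Fin (2 * n),
        (A * A.transpose) q q' =
          ∫ z : Fin r → ℝ, (∑ s, A q s * z s) * (∑ s, A q' s * z s)
            ∂(Measure.pi fun _ : Fin r => gaussianReal 0 1)) ∧
    (∫ z : Fin r → ℝ, ∏ q : Fin (2 * n), ∑ s, A q s * z s
        ∂(Measure.pi fun _ : Fin r => gaussianReal 0 1)) =
      ∑ α ∈ Finset.univ.filter
          (fun α : Equiv.Perm (Fin (2 * n)) => α * α = 1 ∧ ∀ q, α q ≠ q),
        ∏ q ∈ Finset.univ.filter (fun q : Fin (2 * n) => q < α q),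
          (A * A.transpose) q (α q) :=
  wick_isserlis_general r n A
end
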